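/- arXiv:1403.2880 — 9 statements merged into one kernel-verified Lean document; each statement's English description precedes it below -/
import Mathlib

section
/- Let q be a power of two with q > 2. Every o-polynomial of F_q has only terms of positive even degree, i.e., if f is an o-polynomial of F_q and the coefficient of x^i in f is nonzero, then i is even and positive. -/
open Polynomial

/-- An o-polynomial of a finite field `F`: a polynomial of degree at most `|F| - 1`
inducing a permutation of `F` with `f(0) = 0`, `f(1) = 1`, such that no three points
of the graph of `f` are collinear. -/
def IsOPoly (F : Type*) [Field F] [Finite F] (f : F[X]) : Prop :=
  f.natDegree ≤ Nat.card F - 1 ∧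
  Function.Bijective (fun x : F => f.eval x) ∧
  f.eval 0 = 0 ∧ f.eval 1 = 1 ∧
  ∀ a b c : F, a ≠ b → a ≠ c → b ≠ c →
    Matrix.det !![1, 1, 1; a, b, c; f.eval a, f.eval b, f.eval c] ≠ 0

/-- Two polynomials `f`, `g` are equivalent if
`g(x) = (f(x+a) + f(a)) / (f(1+a) + f(a))` for some `a ∈ F`. -/
def OEquiv (F : Type*) [Field F] (f g : F[X]) : Prop :=
  ∃ a : F, g = Polynomial.C (f.eval (1 + a) + f.eval a)⁻¹ *
    (f.comp (Polynomial.X + Polynomial.C a) + Polynomial.C (f.eval a))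

section Aux

open Finset

variable {F : Type*} [Field F] [Fintype F]

/-- Power sums vanish except at exponent `q - 1` (in range `< 2(q-1)`). -/
lemma aux_sum_pow (m : ℕ) (hm : m ≠ Fintype.card F - 1)
    (hm2 : m < 2 * (Fintype.card F - 1)) : ∑ x : F, x ^ m = 0 := by
  rcases lt_or_gt_of_ne hm with hlt | hgt
  · exact FiniteField.sum_pow_lt_card_sub_one F m hlt
  · have hq1 : 1 < Fintype.card F := Fintype.one_lt_card
    have h1 : ∑ x : F, x ^ m = ∑ x : F, x ^ (m - (Fintype.card F - 1)) := by
      apply Finset.sum_congr rfl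
      intro x _
      by_cases hx : x = 0
      · subst hx
        rw [zero_pow (by omega), zero_pow (by omega)]
      · have h := FiniteField.pow_card_sub_one_eq_one x hx
        calc x ^ m = x ^ (Fintype.card F - 1) * x ^ (m - (Fintype.card F - 1)) := by
              rw [← pow_add]; congr 1; omega
          _ = x ^ (m - (Fintype.card F - 1)) := by rw [h, one_mul]
    rw [h1]
    exact FiniteField.sum_pow_lt_card_sub_one F _ (by omega)

/-- The top power sum equals `-1`. -/
lemma aux_sum_pow_top (hq : 1 < Fintype.card F) :
    ∑ x : F, x ^ (Fintype.card F - 1) = -1 := by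
  classical
  rw [← Finset.sum_erase_add _ _ (Finset.mem_univ (0 : F)), zero_pow (by omega), add_zero,
    Finset.sum_congr rfl
      (fun x hx => FiniteField.pow_card_sub_one_eq_one x (Finset.ne_of_mem_erase hx)),
    Finset.sum_const, Finset.card_erase_of_mem (Finset.mem_univ 0), Finset.card_univ,
    nsmul_eq_mul, mul_one, Nat.cast_sub (by omega), FiniteField.cast_card_eq_zero,
    Nat.cast_one, zero_sub]

/-- For `s ≠ 0`, the map `x ↦ e x + s * x` is two-to-one, so any sum of a function of it
vanishes in characteristic two. -/
lemma two_to_one_sum (htwo : (2 : F) = 0) (e : F → F) (he : Function.Injective e)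
    (hdet : ∀ a b c : F, a ≠ b → a ≠ c → b ≠ c →
      (e a + e b) * (a + c) ≠ (e a + e c) * (a + b))
    (s : F) (hs : s ≠ 0) (φ : F → F) :
    ∑ x : F, φ (e x + s * x) = 0 := by
  classical
  have hadd : ∀ a b : F, a ≠ b → a + b ≠ 0 := by
    intro a b hab hzero
    exact hab (by linear_combination hzero - b * htwo)
  have hnum : ∀ a b : F, a ≠ b → e a + e b ≠ 0 := by
    intro a b hab hzero
    exact hab (he (by linear_combination hzero - e b * htwo))
  -- partner existence
  have hex : ∀ a : F, ∃ b, b ≠ a ∧ e b + s * b = e a + s * a := by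
    intro a
    have hsurj := Finset.surj_on_of_inj_on_of_card_le
      (s := Finset.univ.erase a) (t := Finset.univ.erase (0 : F))
      (fun b _ => (e a + e b) / (a + b))
      (fun b hb => by
        have hba : b ≠ a := (Finset.mem_erase.1 hb).1
        exact Finset.mem_erase.2
          ⟨div_ne_zero (hnum a b (Ne.symm hba)) (hadd a b (Ne.symm hba)), Finset.mem_univ _⟩)
      (fun b₁ b₂ hb₁ hb₂ heq => by
        by_contra hne
        have h1 : b₁ ≠ a := (Finset.mem_erase.1 hb₁).1
        have h2 : b₂ ≠ a := (Finset.mem_erase.1 hb₂).1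
        apply hdet a b₁ b₂ (Ne.symm h1) (Ne.symm h2) hne
        rw [div_eq_div_iff (hadd a b₁ (Ne.symm h1)) (hadd a b₂ (Ne.symm h2))] at heq
        linear_combination heq)
      (by simp)
      s (Finset.mem_erase.2 ⟨hs, Finset.mem_univ _⟩)
    obtain ⟨b, hb, hsb⟩ := hsurj
    have hba : b ≠ a := (Finset.mem_erase.1 hb).1
    refine ⟨b, hba, ?_⟩
    rw [eq_div_iff (hadd a b (Ne.symm hba))] at hsb
    linear_combination hsb + (e b - s * a) * htwo
  -- uniqueness of the partner
  have huniq : ∀ a b b' : F, b ≠ a → b' ≠ a → e b + s * b = e a + s * a →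
      e b' + s * b' = e a + s * a → b = b' := by
    intro a b b' hba hb'a hb hb'
    by_contra hne
    apply hdet a b b' (Ne.symm hba) (Ne.symm hb'a) hne
    have h1 : e a + e b = s * (a + b) := by
      linear_combination -hb + (e b - s * a) * htwo
    have h2 : e a + e b' = s * (a + b') := by
      linear_combination -hb' + (e b' - s * a) * htwo
    rw [h1, h2]; ring
  choose g hg1 hg2 using hex
  exact Finset.sum_ninvolution g
    (fun a => by rw [hg2 a]; linear_combination φ (e a + s * a) * htwo)
    (fun a _ => hg1 a)
    (fun a => Finset.mem_univ _)
    (fun a => huniq (g a) (g (g a)) a (hg1 (g a)) (Ne.symm (hg1 a)) (hg2 (g a)) (hg2 a).symm)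

/-- Coefficient extraction: `∑ x, x^j * f(x) = coeff (q-1-j) f`. -/
lemma aux_T (htwo : (2 : F) = 0) (hq : 2 < Fintype.card F) (f : F[X])
    (hdeg : f.natDegree ≤ Fintype.card F - 1) (j : ℕ) (hj : j ≤ Fintype.card F - 2) :
    ∑ x : F, x ^ j * f.eval x = f.coeff (Fintype.card F - 1 - j) := by
  classical
  have hS : ∀ x : F, x ^ j * f.eval x
      = ∑ i ∈ Finset.range (f.natDegree + 1), f.coeff i * x ^ (i + j) := by
    intro x
    rw [eval_eq_sum_range, Finset.mul_sum]
    exact Finset.sum_congr rfl (fun i _ => by ring)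
  simp_rw [hS]
  rw [Finset.sum_comm]
  have hterm : ∀ i ∈ Finset.range (f.natDegree + 1),
      (∑ x : F, f.coeff i * x ^ (i + j))
        = if i = Fintype.card F - 1 - j then f.coeff i else 0 := by
    intro i hi
    rw [Finset.mem_range] at hi
    rw [← Finset.mul_sum]
    by_cases h : i = Fintype.card F - 1 - j
    · have hij : i + j = Fintype.card F - 1 := by omega
      rw [if_pos h, hij, aux_sum_pow_top (by omega)]
      linear_combination -(f.coeff i) * htwo
    · rw [if_neg h, aux_sum_pow (i + j) (by omega) (by omega), mul_zero]
  rw [Finset.sum_congr rfl hterm,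
    Finset.sum_ite_eq' (Finset.range (f.natDegree + 1)) (Fintype.card F - 1 - j)
      (fun i => f.coeff i)]
  by_cases h : Fintype.card F - 1 - j ∈ Finset.range (f.natDegree + 1)
  · rw [if_pos h]
  · rw [if_neg h, eq_comm]
    rw [Finset.mem_range] at h
    exact Polynomial.coeff_eq_zero_of_natDegree_lt (by omega)

/-- The key vanishing result: odd coefficients of a polynomial whose shears are
two-to-one all vanish. -/
lemma coeff_vanish (htwo : (2 : F) = 0) (hq2 : 2 < Fintype.card F)
    (heven : Even (Fintype.card F)) (f : F[X])
    (hdeg : f.natDegree ≤ Fintype.card F - 1)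
    (hsum : ∀ s : F, s ≠ 0 → ∀ k : ℕ, ∑ x : F, (f.eval x + s * x) ^ k = 0)
    (i : ℕ) (hi1 : 1 ≤ i) (hi2 : i ≤ Fintype.card F - 1) (hodd : Odd i) :
    f.coeff i = 0 := by
  classical
  set q := Fintype.card F with hqdef
  set j := q - 1 - i with hjdef
  set k := j + 1 with hkdef
  set d : ℕ → F := fun m => (k.choose m : F) * ∑ x : F, x ^ m * (f.eval x) ^ (k - m) with hd
  set P : F[X] := ∑ m ∈ Finset.range (k + 1), C (d m) * X ^ m with hP
  have hkq : k ≤ q - 1 := by omega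
  have hPcoeff : ∀ m, P.coeff m = if m ∈ Finset.range (k + 1) then d m else 0 := by
    intro m
    rw [hP, Polynomial.finset_sum_coeff]
    simp_rw [Polynomial.coeff_C_mul, Polynomial.coeff_X_pow]
    simp only [mul_ite, mul_one, mul_zero]
    rw [Finset.sum_ite_eq (Finset.range (k + 1)) m d]
  have hPdeg : P.natDegree ≤ k := by
    rw [hP]
    apply Polynomial.natDegree_sum_le_of_forall_le
    intro m hm
    rw [Finset.mem_range] at hm
    exact le_trans (Polynomial.natDegree_C_mul_X_pow_le _ _) (by omega)
  have hPeval : ∀ s : F, s ≠ 0 → P.eval s = 0 := by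
    intro s hs
    have h1 : P.eval s = ∑ m ∈ Finset.range (k + 1), d m * s ^ m := by
      rw [hP, Polynomial.eval_finset_sum]
      exact Finset.sum_congr rfl (fun m _ => by simp)
    have h2 : ∑ m ∈ Finset.range (k + 1), d m * s ^ m
        = ∑ x : F, (f.eval x + s * x) ^ k := by
      simp_rw [hd, Finset.mul_sum, Finset.sum_mul]
      rw [Finset.sum_comm]
      apply Finset.sum_congr rfl
      intro x _
      rw [add_comm (f.eval x) (s * x), add_pow]
      apply Finset.sum_congr rfl
      intro m _
      rw [mul_pow]; ring
    rw [h1, h2, hsum s hs k]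
  set c := P.coeff (q - 1) with hc
  set P' : F[X] := P + C c * (X ^ (q - 1) + 1) with hP'
  have hP'deg : P'.natDegree ≤ q - 2 := by
    rw [Polynomial.natDegree_le_iff_coeff_eq_zero]
    intro N hN
    rw [hP', Polynomial.coeff_add, Polynomial.coeff_C_mul, Polynomial.coeff_add,
      Polynomial.coeff_X_pow, Polynomial.coeff_one]
    rcases eq_or_ne N (q - 1) with rfl | hN'
    · rw [if_pos rfl, if_neg (by omega), ← hc]
      linear_combination c * htwo
    · have hNk : P.natDegree < N := lt_of_le_of_lt hPdeg (by omega)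
      rw [Polynomial.coeff_eq_zero_of_natDegree_lt hNk, if_neg hN', if_neg (by omega)]
      ring
  have hP'0 : P' = 0 := by
    apply Polynomial.eq_zero_of_natDegree_lt_card_of_eval_eq_zero' P' (Finset.univ.erase (0 : F))
    · intro x hx
      have hx0 : x ≠ 0 := (Finset.mem_erase.1 hx).1
      rw [hP']
      simp only [Polynomial.eval_add, Polynomial.eval_mul, Polynomial.eval_pow,
        Polynomial.eval_C, Polynomial.eval_X, Polynomial.eval_one]
      rw [hPeval x hx0, FiniteField.pow_card_sub_one_eq_one x hx0]
      linear_combination c * htwo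
    · rw [Finset.card_erase_of_mem (Finset.mem_univ _), Finset.card_univ]
      exact lt_of_le_of_lt hP'deg (by omega)
  have hPj : P.coeff j = 0 := by
    have h0 : P'.coeff j = 0 := by rw [hP'0]; simp
    rw [hP', Polynomial.coeff_add, Polynomial.coeff_C_mul, Polynomial.coeff_add,
      Polynomial.coeff_X_pow, Polynomial.coeff_one] at h0
    rcases eq_or_ne j 0 with hj0 | hj0
    · have hc0 : c = 0 := by
        rw [hc]
        exact Polynomial.coeff_eq_zero_of_natDegree_lt (lt_of_le_of_lt hPdeg (by omega))
      rw [hc0] at h0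
      simpa using h0
    · rw [if_neg (by omega), if_neg hj0] at h0
      simpa using h0
  have hdj : d j = 0 := by
    have hh := hPcoeff j
    rw [if_pos (Finset.mem_range.2 (by omega))] at hh
    rw [← hh, hPj]
  have hchoose : k.choose j = j + 1 := Nat.choose_succ_self_right j
  have hkj : k - j = 1 := by omega
  have hT : ∑ x : F, x ^ j * (f.eval x) ^ (k - j) = f.coeff i := by
    rw [hkj]
    simp_rw [pow_one]
    have hTT := aux_T htwo hq2 f hdeg j (by omega)
    rwa [show q - 1 - j = i by omega] at hTT
  have hcast : ((k.choose j : ℕ) : F) = 1 := by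
    rw [hchoose]
    obtain ⟨u, hu⟩ := heven
    obtain ⟨t, ht⟩ := hodd
    have hju : j + 1 = 2 * (u - t - 1) + 1 := by omega
    rw [hju]
    push_cast
    rw [htwo]; ring
  rw [hd] at hdj
  simp only at hdj
  rw [hcast, hT, one_mul] at hdj
  exact hdj

end Aux

/-- Every o-polynomial of `F_q` with `q > 2` has only terms of positive even degree. -/
theorem opoly_even_terms (F : Type*) [Field F] [Finite F] (h : ℕ) (hh : 0 < h)
    (hq : Nat.card F = 2 ^ h) (h2 : 2 < Nat.card F) (f : F[X]) (hf : IsOPoly F f) :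
    ∀ i : ℕ, f.coeff i ≠ 0 → Even i ∧ 0 < i := by
  classical
  haveI : Fintype F := Fintype.ofFinite F
  obtain ⟨hdeg, hbij, h0, h1, hdet⟩ := hf
  rw [Nat.card_eq_fintype_card] at hq h2 hdeg
  -- characteristic 2
  obtain ⟨n, hpprime, hcard⟩ := FiniteField.card F (ringChar F)
  have hchar2 : ringChar F = 2 := by
    have hdvd : ringChar F ∣ 2 ^ h := by
      rw [← hq, hcard]
      exact dvd_pow_self _ (by exact_mod_cast n.ne_zero)
    exact (Nat.prime_dvd_prime_iff_eq hpprime Nat.prime_two).1 (hpprime.dvd_of_dvd_pow hdvd)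
  haveI : CharP F 2 := hchar2 ▸ ringChar.charP F
  have htwo : (2 : F) = 0 := CharTwo.two_eq_zero
  have heven : Even (Fintype.card F) := by
    rw [hq]
    exact (Nat.even_pow).2 ⟨even_two, by omega⟩
  have he : Function.Injective (fun x : F => f.eval x) := hbij.1
  have hdet' : ∀ a b c : F, a ≠ b → a ≠ c → b ≠ c →
      (f.eval a + f.eval b) * (a + c) ≠ (f.eval a + f.eval c) * (a + b) := by
    intro a b c hab hac hbc heq
    apply hdet a b c hab hac hbc
    rw [Matrix.det_fin_three]
    norm_num [Matrix.cons_val_one, Matrix.cons_val_zero, Matrix.cons_val_two, Matrix.head_cons,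
      Matrix.tail_cons]
    linear_combination heq + (b * f.eval c - c * f.eval b) * htwo
  have hsum : ∀ s : F, s ≠ 0 → ∀ k : ℕ, ∑ x : F, (f.eval x + s * x) ^ k = 0 := by
    intro s hs k
    exact two_to_one_sum htwo (fun x => f.eval x) he hdet' s hs (fun y => y ^ k)
  intro i hci
  have hile : i ≤ Fintype.card F - 1 := le_trans (Polynomial.le_natDegree_of_ne_zero hci) hdeg
  have hi0 : i ≠ 0 := by
    intro h0'
    apply hci
    rw [h0', Polynomial.coeff_zero_eq_eval_zero, h0]
  refine ⟨?_, Nat.pos_of_ne_zero hi0⟩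
  by_contra hodd
  rw [Nat.not_even_iff_odd] at hodd
  exact hci (coeff_vanish htwo h2 heven f hdeg hsum i (by omega) hile hodd)
end

section
/- Let q be a power of two. If f is an o-polynomial of F_q of degree 6, then f is equivalent to x^6. -/
open Polynomial

/-!
For each `a`, the slope map `x ↦ (f (x + a) - f a) / x` of an o-polynomial is a polynomial of
degree `< q - 1` that permutes `Fˣ`. Its sum over `F` is `0`, as for every such polynomial, and so
is its sum over `Fˣ`, which equals `∑ x`; hence its value at `0`, namely `f' a`, vanishes. So
`f' = 0`, and in characteristic `2` this makes `f = g (x ^ 2)` with `g` an injective cubic of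
leading coefficient `w`. Translating `g` so that its linear term disappears, a nonzero quadratic
term `c x ^ 2` would give the collision `g (c / w + b) = g b`; so `g` is a translate of `w x ^ 3`,
and `f (x + a) + f a = w x ^ 6`.
-/

theorem Polynomial.expand_comp_X_add_C {R : Type*} [CommSemiring R] (p : ℕ) [ExpChar R p]
    (g : R[X]) (a : R) :
    (expand R p g).comp (X + C a) = expand R p (g.comp (X + C (a ^ p))) := by
  simp only [expand_eq_comp_X_pow, comp_assoc, add_comp, X_comp, C_comp, pow_comp,
    add_pow_expChar, C_pow]

theorem Polynomial.injective_eval_of_injective_eval_expand {R : Type*} [CommSemiring R]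
    (p : ℕ) [ExpChar R p] [PerfectRing R p] {g : R[X]}
    (hinj : Function.Injective fun x => (expand R p g).eval x) :
    Function.Injective fun x => g.eval x := by
  intro y z hyz
  obtain ⟨y, rfl⟩ := surjective_frobenius R p y
  obtain ⟨z, rfl⟩ := surjective_frobenius R p z
  simp only [frobenius_def, ← expand_eval] at hyz ⊢
  rw [hinj hyz]

theorem Matrix.det_fin_three_of_row_zero_eq_one {R : Type*} [CommRing R] (a b c d e g : R) :
    !![1, 1, 1; a, b, c; d, e, g].det = (b - a) * (g - d) - (c - a) * (e - d) := by
  simp only [det_fin_three, of_apply, cons_val', cons_val_zero, cons_val_fin_one, cons_val_one,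
    cons_val, one_mul]
  ring

namespace FiniteField

variable {K : Type*} [Field K] [Fintype K]

theorem sum_eval_eq_zero_of_natDegree_lt {p : K[X]} (hp : p.natDegree < Fintype.card K - 1) :
    ∑ x, p.eval x = 0 := by
  simp only [eval_eq_sum_range' hp]
  rw [Finset.sum_comm]
  refine Finset.sum_eq_zero fun i hi => ?_
  rw [← Finset.mul_sum, sum_pow_lt_card_sub_one K i (Finset.mem_range.mp hi), mul_zero]

theorem eval_zero_eq_zero_of_mapsTo_of_injOn (hK : 2 < Fintype.card K) {φ : K[X]}
    (hφ : φ.natDegree < Fintype.card K - 1) (hmaps : Set.MapsTo (φ.eval ·) {0}ᶜ {0}ᶜ)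
    (hinj : Set.InjOn (φ.eval ·) {0}ᶜ) : φ.eval 0 = 0 := by
  classical
  set s : Finset K := Finset.univ.erase 0
  have hs : (s : Set K) = {0}ᶜ := by simp [s, Set.compl_eq_univ_sdiff]
  rw [← hs] at hmaps hinj
  have hperm : ∑ x ∈ s, φ.eval x = ∑ x ∈ s, x :=
    Finset.sum_nbij _ hmaps hinj (Finset.surjOn_of_injOn_of_card_le _ hmaps hinj le_rfl)
      fun _ _ => rfl
  have hsum_id : ∑ x : K, x = 0 := by simpa using sum_pow_lt_card_sub_one K 1 (by omega)
  have := sum_eval_eq_zero_of_natDegree_lt hφ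
  rwa [← Finset.add_sum_erase _ _ (Finset.mem_univ 0), hperm,
    Finset.sum_erase (f := fun x : K => x) _ rfl, hsum_id, add_zero] at this

end FiniteField

theorem Polynomial.exists_comp_X_add_C_sub_C_eq_C_mul_X_pow_three {F : Type*} [Field F]
    [CharP F 2] [PerfectRing F 2] {g : F[X]} (hinj : Function.Injective fun x => g.eval x)
    (h3 : g.natDegree = 3) :
    ∃ b, g.comp (X + C b) - C (g.eval b) = C g.leadingCoeff * X ^ 3 := by
  set w := g.leadingCoeff
  have hw : w ≠ 0 := leadingCoeff_ne_zero.mpr (by rintro rfl; simp at h3)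
  have hg : g = C w * X ^ 3 + C (g.coeff 2) * X ^ 2 + C (g.coeff 1) * X + C (g.coeff 0) := by
    conv_lhs => rw [g.as_sum_range_C_mul_X_pow, h3]
    simp only [Finset.sum_range_succ, Finset.range_one, Finset.sum_singleton, pow_zero, mul_one,
      pow_one, w, leadingCoeff, h3]
    ring
  obtain ⟨b, hb⟩ := surjective_frobenius F 2 (g.coeff 1 / w)
  have hu : g.coeff 1 = w * b ^ 2 := by rw [← frobenius_def, hb]; field_simp
  set c := g.coeff 2 + w * b
  have hshift : g.comp (X + C b) - C (g.eval b) = C w * X ^ 3 + C c * X ^ 2 := by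
    rw [hg, hu]
    simp only [c, eval_add, eval_mul, eval_C, eval_pow, eval_X, add_comp, mul_comp, C_comp,
      pow_comp, X_comp, map_add, map_mul, map_pow]
    linear_combination (C w * C b * X ^ 2 + (2 * C w * C b ^ 2 + C (g.coeff 2) * C b) * X) *
      CharTwo.two_eq_zero (R := F[X])
  have hc : c = 0 := by
    have hcube : w * (c / w) ^ 3 = c * (c / w) ^ 2 := by field_simp
    have hroot : g.eval (c / w + b) = g.eval b := by
      have := congrArg (eval (c / w)) hshift
      simp only [eval_sub, eval_comp, eval_add, eval_X, eval_C, eval_mul, eval_pow] at this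
      linear_combination this + hcube + c * (c / w) ^ 2 * CharTwo.two_eq_zero (R := F)
    simpa [hw] using hinj hroot
  exact ⟨b, by rw [hshift, hc, C_0, zero_mul, add_zero]⟩

theorem oEquiv_X_pow_of_comp_X_add_C {F : Type*} [Field F] {f : F[X]} {a w : F} {n : ℕ}
    (hw : w ≠ 0) (h : f.comp (X + C a) + C (f.eval a) = C w * X ^ n) : OEquiv F f (X ^ n) := by
  have hnorm : f.eval (1 + a) + f.eval a = w := by simpa using congrArg (eval 1) h
  refine ⟨a, ?_⟩
  rw [h, hnorm, ← mul_assoc, ← C_mul, inv_mul_cancel₀ hw, C_1, one_mul]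

namespace IsOPoly

variable {F : Type*} [Field F] [Finite F] {f : F[X]}

theorem derivative_eval_eq_zero (hf : IsOPoly F f) (hF : 2 < Nat.card F) (a : F) :
    f.derivative.eval a = 0 := by
  obtain ⟨hdeg, hbij, -, -, hcol⟩ := hf
  have := Fintype.ofFinite F
  rw [Nat.card_eq_fintype_card] at hdeg hF
  set φ := (taylor a f).divX
  have hslope : ∀ x, f.eval (x + a) = x * φ.eval x + f.eval a := fun x => by
    rw [← taylor_eval, ← X_mul_divX_add (taylor a f), taylor_coeff_zero]
    simp [φ]
  rw [← taylor_coeff_one, ← coeff_divX, coeff_zero_eq_eval_zero]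
  refine FiniteField.eval_zero_eq_zero_of_mapsTo_of_injOn hF ?_ (fun x hx hφx => hx ?_) ?_
  · rw [natDegree_divX_eq_natDegree_tsub_one, natDegree_taylor]
    omega
  · have hcoll : f.eval (x + a) = f.eval (0 + a) := by
      rw [zero_add, hslope, show φ.eval x = 0 from hφx, mul_zero, zero_add]
    simpa using hbij.1 hcoll
  · intro x hx y hy hxy
    by_contra hne
    refine hcol a (x + a) (y + a) (by simpa [eq_comm] using hx) (by simpa [eq_comm] using hy)
      (by simpa using hne) ?_
    rw [Matrix.det_fin_three_of_row_zero_eq_one, hslope, hslope,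
      show φ.eval x = φ.eval y from hxy]
    ring

theorem derivative_eq_zero (hf : IsOPoly F f) (hF : 2 < Nat.card F) : f.derivative = 0 := by
  have := Fintype.ofFinite F
  refine eq_zero_of_natDegree_lt_card_of_eval_eq_zero _ Function.injective_id
    (hf.derivative_eval_eq_zero hF) ?_
  have hdeg := hf.1
  rw [Nat.card_eq_fintype_card] at hdeg hF
  have := natDegree_derivative_le f
  omega

end IsOPoly

theorem opoly_degree_six_general (F : Type*) [Field F] [Finite F] (h : ℕ)
    (hq : Nat.card F = 2 ^ h) (f : F[X]) (hf : IsOPoly F f)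
    (hdeg : f.natDegree = 6) :
    OEquiv F f (X ^ 6) := by
  have := Fintype.ofFinite F
  have : CharP F 2 := charP_of_card_eq_prime_pow (Nat.card_eq_fintype_card.symm.trans hq)
  obtain ⟨g, rfl⟩ : ∃ g, expand F 2 g = f :=
    ⟨_, expand_contract 2 (hf.derivative_eq_zero (by have := hf.1; omega)) two_ne_zero⟩
  have hg3 : g.natDegree = 3 := by rw [natDegree_expand] at hdeg; omega
  obtain ⟨b, hb⟩ := exists_comp_X_add_C_sub_C_eq_C_mul_X_pow_three
    (injective_eval_of_injective_eval_expand 2 hf.2.1.1) hg3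
  obtain ⟨a, rfl⟩ := surjective_frobenius F 2 b
  rw [frobenius_def] at hb
  refine oEquiv_X_pow_of_comp_X_add_C (a := a) (w := g.leadingCoeff)
    (leadingCoeff_ne_zero.mpr (by rintro rfl; simp at hg3)) ?_
  rw [← CharTwo.sub_eq_add, expand_comp_X_add_C, expand_eval, ← expand_C 2 (g.eval _),
    ← map_sub, hb]
  simp [← pow_mul]

/-- Every o-polynomial of degree `6` is equivalent to `x^6`. -/
theorem opoly_degree_six (F : Type*) [Field F] [Finite F] (h : ℕ) (hh : 0 < h)
    (hq : Nat.card F = 2 ^ h) (f : F[X]) (hf : IsOPoly F f)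
    (hdeg : f.natDegree = 6) :
    OEquiv F f (X ^ 6) :=
  opoly_degree_six_general F h hq f hf hdeg
end

section
/- Let n be an even positive integer and let θ be an element of an algebraically closed field of characteristic 2 with θ ∉ F_2 (i.e., θ ≠ 0 and θ ≠ 1). If the linear form x + z + θ(y+z) divides the polynomial x(y^n+z^n) + y(x^n+z^n) + z(x^n+y^n), then n is a power of two. -/
/-- The denominator `(x+y)(x+z)(y+z)` as a polynomial in the variables
`x = X 0`, `y = X 1`, `z = X 2`. -/
noncomputable def denom (F : Type*) [Field F] : MvPolynomial (Fin 3) F :=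
  (MvPolynomial.X 0 + MvPolynomial.X 1) * (MvPolynomial.X 0 + MvPolynomial.X 2) *
    (MvPolynomial.X 1 + MvPolynomial.X 2)

/-- The numerator `x(f(y)+f(z)) + y(f(x)+f(z)) + z(f(x)+f(y))` of `Φ_f`;
`Φ_f` is the (exact) quotient of `numer F f` by `denom F`. -/
noncomputable def numer (F : Type*) [Field F] (f : Polynomial F) : MvPolynomial (Fin 3) F :=
  MvPolynomial.X 0 *
      (Polynomial.aeval (MvPolynomial.X 1) f + Polynomial.aeval (MvPolynomial.X 2) f) +
    MvPolynomial.X 1 *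
      (Polynomial.aeval (MvPolynomial.X 0) f + Polynomial.aeval (MvPolynomial.X 2) f) +
    MvPolynomial.X 2 *
      (Polynomial.aeval (MvPolynomial.X 0) f + Polynomial.aeval (MvPolynomial.X 1) f)

/-- The numerator `x(y^j+z^j) + y(x^j+z^j) + z(x^j+y^j)` of `φ_j`;
`φ_j` is the (exact) quotient of `numerMon F j` by `denom F`. -/
noncomputable def numerMon (F : Type*) [Field F] (j : ℕ) : MvPolynomial (Fin 3) F :=
  MvPolynomial.X 0 * (MvPolynomial.X 1 ^ j + MvPolynomial.X 2 ^ j) +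
    MvPolynomial.X 1 * (MvPolynomial.X 0 ^ j + MvPolynomial.X 2 ^ j) +
    MvPolynomial.X 2 * (MvPolynomial.X 0 ^ j + MvPolynomial.X 1 ^ j)

/-- A polynomial over `F` has an absolutely irreducible factor over `F` if it has a
nonconstant factor with coefficients in `F` that stays irreducible over the algebraic
closure of `F`. -/
def HasAbsIrredFactor (F : Type*) [Field F] (P : MvPolynomial (Fin 3) F) : Prop :=
  ∃ g : MvPolynomial (Fin 3) F, g ∣ P ∧ 0 < g.totalDegree ∧
    Irreducible (MvPolynomial.map (algebraMap F (AlgebraicClosure F)) g)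

open Polynomial

private lemma coeff_pow_lin {K : Type*} [Field K] (A B : K) (q m d : ℕ) :
    ((C A * X ^ q + C B) ^ m).coeff d =
      ∑ i ∈ Finset.range (m + 1),
        (if d = q * i then A ^ i * B ^ (m - i) * (m.choose i : K) else 0) := by
  rw [add_pow, Polynomial.finset_sum_coeff]
  refine Finset.sum_congr rfl fun i _ => ?_
  have h : (C A * X ^ q) ^ i * C B ^ (m - i) * ((m.choose i : ℕ) : Polynomial K)
      = C (A ^ i * B ^ (m - i) * (m.choose i : K)) * X ^ (q * i) := by
    simp only [mul_pow, ← pow_mul, ← C_pow, C_mul, Polynomial.C_eq_natCast]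
    ring
  rw [h, Polynomial.coeff_C_mul, Polynomial.coeff_X_pow, mul_ite, mul_one, mul_zero]

/-- Over an algebraically closed field of characteristic 2, if `θ ∉ F_2` and the
linear form `x + z + θ(y+z)` divides `x(y^n+z^n) + y(x^n+z^n) + z(x^n+y^n)` for an
even positive integer `n`, then `n` is a power of two. -/
theorem linear_dvd_power_of_two (K : Type*) [Field K] [IsAlgClosed K] [CharP K 2]
    (n : ℕ) (hn : Even n) (hn0 : 0 < n) (θ : K) (hθ0 : θ ≠ 0) (hθ1 : θ ≠ 1)
    (hdvd : (MvPolynomial.X 0 + MvPolynomial.X 2 +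
        MvPolynomial.C θ * (MvPolynomial.X 1 + MvPolynomial.X 2)) ∣ numerMon K n) :
    ∃ j : ℕ, n = 2 ^ j := by
  classical
  obtain ⟨k, m, hm2, rfl⟩ := Nat.exists_eq_pow_mul_and_not_dvd hn0.ne' 2 (by norm_num)
  rcases eq_or_ne m 1 with rfl | hm1
  · exact ⟨k, by ring⟩
  exfalso
  have hm0 : m ≠ 0 := by rintro rfl; simp at hn0
  have hmod : m % 2 = 1 := Nat.two_dvd_ne_zero.mp hm2
  have hm3 : 3 ≤ m := by omega
  have hk1 : 1 ≤ k := by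
    by_contra h
    have hk0 : k = 0 := by omega
    subst hk0
    simp only [pow_zero, one_mul] at hn
    exact hm2 hn.two_dvd
  set q : ℕ := 2 ^ k with hq
  clear_value q
  have hq2 : 2 ≤ q := by
    calc 2 = 2 ^ 1 := (pow_one 2).symm
    _ ≤ 2 ^ k := Nat.pow_le_pow_right (by norm_num) hk1
    _ = q := hq.symm
  have h2K : (2 : K) = 0 := by exact_mod_cast CharP.cast_eq_zero K 2
  have h2P : (2 : Polynomial K) = 0 := by exact_mod_cast CharP.cast_eq_zero (Polynomial K) 2
  set u : Polynomial K := C θ * X + C (1 + θ) with hu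
  set φ := MvPolynomial.aeval (R := K) ![u, X, 1] with hφ
  have hL : φ (MvPolynomial.X 0 + MvPolynomial.X 2 +
      MvPolynomial.C θ * (MvPolynomial.X 1 + MvPolynomial.X 2)) = 0 := by
    simp only [hφ, map_add, map_mul, MvPolynomial.aeval_X, MvPolynomial.aeval_C,
      Matrix.cons_val_zero, Matrix.cons_val_one, Matrix.head_cons, Matrix.cons_val_two,
      Matrix.tail_cons, algebraMap_eq, hu, C_add, C_1]
    linear_combination (C θ * X + C θ + 1) * h2P
  obtain ⟨w, hw⟩ := hdvd
  have hE : u * (X ^ (q * m) + 1) + X * (u ^ (q * m) + 1) +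
      1 * (u ^ (q * m) + X ^ (q * m)) = 0 := by
    have h := congrArg φ hw
    rw [map_mul, hL, zero_mul] at h
    simpa only [numerMon, hφ, map_add, map_mul, map_pow, MvPolynomial.aeval_X,
      Matrix.cons_val_zero, Matrix.cons_val_one, Matrix.head_cons, Matrix.cons_val_two,
      Matrix.tail_cons, one_pow] using h
  set A : K := θ ^ q with hA
  set B : K := (1 + θ) ^ q with hB
  have h1θ : (1 : K) + θ ≠ 0 := by
    intro h
    exact hθ1 ((eq_neg_of_add_eq_zero_right h).trans (CharTwo.neg_eq 1))
  have hun : u ^ (q * m) = (C A * X ^ q + C B) ^ m := by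
    rw [pow_mul, hu, hq, add_pow_char_pow, mul_pow, ← C_pow, ← C_pow, hA, hB, hq]
  -- the interesting degree
  set d : ℕ := q * (m - 1) with hd
  clear_value d
  have hd4 : 4 ≤ d := by
    have : 2 * 2 ≤ q * (m - 1) := Nat.mul_le_mul hq2 (by omega)
    omega
  have hdn : d < q * m := by
    rw [hd]
    exact (Nat.mul_lt_mul_left (by omega)).mpr (by omega)
  -- extract coefficient d
  have hc := congrArg (fun p => Polynomial.coeff p d) hE
  simp only [one_mul, mul_add, mul_one, Polynomial.coeff_add, Polynomial.coeff_zero] at hc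
  -- compute each piece
  have h1 : (u * X ^ (q * m)).coeff d = 0 := by
    rw [Polynomial.coeff_mul_X_pow', if_neg (by omega)]
  have h2 : u.coeff d = 0 := by
    rw [hu]
    simp only [Polynomial.coeff_add, Polynomial.coeff_C_mul, Polynomial.coeff_X,
      Polynomial.coeff_C]
    split_ifs <;> first | (exfalso; omega) | ring
  have h3 : (X * u ^ (q * m)).coeff d = 0 := by
    obtain ⟨e, he⟩ : ∃ e, d = e + 1 := ⟨d - 1, by omega⟩
    rw [he, Polynomial.coeff_X_mul, hun, coeff_pow_lin]
    refine Finset.sum_eq_zero fun i _ => ?_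
    rw [if_neg]
    intro hqe
    have hdvd1 : q ∣ 1 := by
      have h1' : q * i + 1 = q * (m - 1) := by omega
      have : q ∣ q * (m - 1) - q * i := Nat.dvd_sub (dvd_mul_right q _) (dvd_mul_right q _)
      simpa [show q * (m - 1) - q * i = 1 by omega] using this
    have := Nat.le_of_dvd one_pos hdvd1
    omega
  have h4 : (X : Polynomial K).coeff d = 0 := by
    rw [Polynomial.coeff_X, if_neg (by omega)]
  have h5 : ((X : Polynomial K) ^ (q * m)).coeff d = 0 := by
    rw [Polynomial.coeff_X_pow, if_neg (by omega)]
  have h6 : (u ^ (q * m)).coeff d = A ^ (m - 1) * B := by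
    rw [hun, coeff_pow_lin]
    rw [Finset.sum_eq_single (m - 1)]
    · rw [if_pos hd]
      have hch : m.choose (m - 1) = m := by
        rw [Nat.choose_symm (by omega), Nat.choose_one_right]
      have hms : m - (m - 1) = 1 := by omega
      have hmK : ((m : ℕ) : K) = 1 := by
        obtain ⟨l, hl⟩ : ∃ l, m = 2 * l + 1 := ⟨m / 2, by omega⟩
        rw [hl]; push_cast; rw [h2K]; ring
      rw [hch, hms, hmK, pow_one, mul_one]
    · intro i hi hne
      rw [if_neg]
      rw [hd]
      intro h
      exact hne (Nat.eq_of_mul_eq_mul_left (by omega) h).symm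
    · intro h
      exact absurd (Finset.mem_range.mpr (by omega)) h
  rw [h1, h2, h3, h4, h5, h6] at hc
  simp only [add_zero, zero_add] at hc
  have : A ^ (m - 1) * B ≠ 0 :=
    mul_ne_zero (pow_ne_zero _ (pow_ne_zero _ hθ0)) (pow_ne_zero _ h1θ)
  exact this hc
end

section
/- For every integer i ≥ 1, the identity (x+y)^2 · φ_{2i}(x,y,x) = (x^i + y^i)^2 holds over F_2; equivalently, φ_{2i}(x,y,x) = ((x^i+y^i)/(x+y))^2. -/
open MvPolynomial Finset


/-- For `i ≥ 1`, substituting `z := x` in `φ_{2i}` gives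
`(x+y)^2 · φ_{2i}(x,y,x) = (x^i + y^i)^2` over `F_2`. -/
theorem phi_eval_xyx (i : ℕ) (hi : 1 ≤ i) (φ : MvPolynomial (Fin 3) (ZMod 2))
    (hφ : denom (ZMod 2) * φ = numerMon (ZMod 2) (2 * i)) :
    (MvPolynomial.X 0 + MvPolynomial.X 1 : MvPolynomial (Fin 3) (ZMod 2)) ^ 2 *
        MvPolynomial.aeval ![MvPolynomial.X 0, MvPolynomial.X 1, MvPolynomial.X 0] φ =
      (MvPolynomial.X 0 ^ i + MvPolynomial.X 1 ^ i) ^ 2 := by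
  rw [denom, numerMon] at hφ
  have h2 : (2 : MvPolynomial (Fin 3) (ZMod 2)) = 0 := CharTwo.two_eq_zero
  set x : MvPolynomial (Fin 3) (ZMod 2) := X 0 with hx
  set y : MvPolynomial (Fin 3) (ZMod 2) := X 1 with hy
  set z : MvPolynomial (Fin 3) (ZMod 2) := X 2 with hz
  set c : MvPolynomial (Fin 3) (ZMod 2) := ∑ k ∈ Finset.range i, x ^ k * z ^ (i - 1 - k) with hcd
  have hc : c * (x + z) = x ^ i + z ^ i := by
    have := geom_sum₂_mul x z i
    rwa [CharTwo.sub_eq_add, CharTwo.sub_eq_add] at this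
  -- rewrite numerator
  have hnum : x * (y ^ (2*i) + z ^ (2*i)) + y * (x ^ (2*i) + z ^ (2*i)) +
      z * (x ^ (2*i) + y ^ (2*i)) =
      (x + z) * ((x ^ i) ^ 2 + (y ^ i) ^ 2 + (x + z) * (x + y) * c ^ 2) := by
    have e : ∀ a : MvPolynomial (Fin 3) (ZMod 2), a ^ (2*i) = (a ^ i) ^ 2 := by
      intro a; rw [mul_comm, pow_mul]
    simp only [e]
    have hc2 : (x + z) * ((x + z) * c ^ 2) = (x ^ i + z ^ i) ^ 2 := by
      rw [← hc]; ring
    calc x * ((y ^ i) ^ 2 + (z ^ i) ^ 2) + y * ((x ^ i) ^ 2 + (z ^ i) ^ 2) +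
        z * ((x ^ i) ^ 2 + (y ^ i) ^ 2)
        = (x + z) * ((x ^ i) ^ 2 + (y ^ i) ^ 2) + (x + y) * ((x ^ i + z ^ i) ^ 2) := by
          linear_combination (-(x * (x^i)^2 + x * (x^i) * (z^i) + y * (x^i) * (z^i))) * h2
      _ = _ := by rw [← hc2]; ring
  rw [hnum] at hφ
  have hxz : (x + z : MvPolynomial (Fin 3) (ZMod 2)) ≠ 0 := by
    intro h
    have := congrArg (MvPolynomial.coeff (Finsupp.single (0 : Fin 3) 1)) h
    simp [hx, hz, MvPolynomial.coeff_X, MvPolynomial.coeff_X', Finsupp.single_eq_single_iff] at this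
  have hcan : (x + y) * (y + z) * φ =
      (x ^ i) ^ 2 + (y ^ i) ^ 2 + (x + z) * (x + y) * c ^ 2 := by
    apply mul_left_cancel₀ hxz
    rw [← hφ]; ring
  have := congrArg (MvPolynomial.aeval ![(X 0 : MvPolynomial (Fin 3) (ZMod 2)), X 1, X 0]) hcan
  simp only [map_add, map_mul, map_pow, aeval_X, hx, hy, hz, Matrix.cons_val_zero,
    Matrix.cons_val_one, Matrix.head_cons, Matrix.cons_val_two, Matrix.tail_cons] at this
  calc (X 0 + X 1 : MvPolynomial (Fin 3) (ZMod 2)) ^ 2 * aeval ![X 0, X 1, X 0] φ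
      = (X 0 + X 1) * (X 1 + X 0) * aeval ![X 0, X 1, X 0] φ := by ring
    _ = (X 0 ^ i) ^ 2 + (X 1 ^ i) ^ 2 + (X 0 + X 0) * (X 0 + X 1) * (aeval ![X 0, X 1, X 0] c) ^ 2 := this
    _ = (X 0 ^ i + X 1 ^ i) ^ 2 := by
        linear_combination ((X 0 : MvPolynomial (Fin 3) (ZMod 2)) * (X 0 + X 1) * (aeval ![X 0, X 1, X 0] c) ^ 2 - X 0 ^ i * X 1 ^ i) * h2
end

section
/- Let k be a positive integer. Over the field F_{2^k}, the polynomial φ_{2^k}(x,y,z) factors as φ_{2^k}(x,y,z) = ∏_{α ∈ F_{2^k} \ F_2} (x + z + α(y+z)), the product running over all elements α of F_{2^k} other than 0 and 1. In particular, (x+y)·φ_{2^k}(x,y,z) = (x+z)^{2^k - 1} + (y+z)^{2^k - 1}. -/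
namespace FiniteField

open Finset

variable (K : Type*) [Field K] [Fintype K]

open Polynomial in
theorem prod_X_sub_C_eq_X_pow_card_sub_X : ∏ a : K, (X - C a) = X ^ Fintype.card K - X := by
  have hmonic : (X ^ Fintype.card K - X : K[X]).Monic :=
    monic_X_pow_sub (by simpa using Fintype.one_lt_card (α := K))
  have hdeg : (X ^ Fintype.card K - X : K[X]).natDegree = Fintype.card K :=
    X_pow_card_sub_X_natDegree_eq K Fintype.one_lt_card
  have h := prod_multiset_X_sub_C_of_monic_of_roots_card_eq hmonic
    (by rw [roots_X_pow_card_sub_X, hdeg, card_val, card_univ])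
  rwa [roots_X_pow_card_sub_X] at h

variable {K}

open Polynomial in
theorem prod_sub_smul_eq_pow_card_sub_mul_pow {A : Type*} [CommRing A] [Algebra K A] (U V : A) :
    ∏ a : K, (U - a • V) = U ^ Fintype.card K - U * V ^ (Fintype.card K - 1) := by
  have h : MvPolynomial.aeval ![U, V] ((∏ a : K, (X - C a)).homogenize (∑ _a : K, 1)) =
      MvPolynomial.aeval ![U, V] ((X ^ Fintype.card K - X : K[X]).homogenize (Fintype.card K)) := by
    rw [prod_X_sub_C_eq_X_pow_card_sub_X, sum_const, smul_eq_mul, mul_one, card_univ]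
  have hdeg : ∀ a ∈ univ, (X - C a : K[X]).natDegree ≤ 1 :=
    fun a _ => natDegree_X_sub_C_le a
  rw [homogenize_finsetProd (n := fun _ => 1) hdeg] at h
  simp only [homogenize_sub, homogenize_X one_ne_zero, homogenize_C,
    homogenize_X_pow le_rfl, homogenize_X Fintype.card_ne_zero, map_prod, map_sub, map_mul,
    map_pow, MvPolynomial.aeval_X, MvPolynomial.aeval_C] at h
  simpa [Algebra.smul_def] using h

theorem prod_sdiff_zero_one_sub_smul_mul [DecidableEq K] {A : Type*} [CommRing A] [IsDomain A]
    [Algebra K A] {U : A} (hU : U ≠ 0) (V : A) :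
    (∏ a ∈ (univ \ {0, 1} : Finset K), (U - a • V)) * (U - V) =
      U ^ (Fintype.card K - 1) - V ^ (Fintype.card K - 1) := by
  refine mul_left_cancel₀ hU ?_
  calc U * ((∏ a ∈ (univ \ {0, 1} : Finset K), (U - a • V)) * (U - V))
      = (∏ a ∈ (univ \ {0, 1} : Finset K), (U - a • V)) * ∏ a ∈ {0, 1}, (U - a • V) := by
        rw [prod_pair zero_ne_one, zero_smul, one_smul, sub_zero]; ring
    _ = ∏ a : K, (U - a • V) := prod_sdiff (subset_univ _)
    _ = U * (U ^ (Fintype.card K - 1) - V ^ (Fintype.card K - 1)) := by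
        rw [prod_sub_smul_eq_pow_card_sub_mul_pow, mul_sub,
          mul_pow_sub_one Fintype.card_ne_zero]

end FiniteField

namespace MvPolynomial

theorem X_add_X_ne_zero {R σ : Type*} [CommSemiring R] [Nontrivial R] {i j : σ} (hij : i ≠ j) :
    (X i + X j : MvPolynomial σ R) ≠ 0 := by
  classical
  intro h
  simpa [hij.symm] using congrArg (eval (Pi.single i 1)) h

end MvPolynomial

open MvPolynomial

theorem numerMon_two_pow (F : Type*) [Field F] [CharP F 2] (k : ℕ) :
    numerMon F (2 ^ k) = (X 0 + X 2) ^ 2 ^ k * (X 1 + X 2) + (X 0 + X 2) * (X 1 + X 2) ^ 2 ^ k := by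
  rw [numerMon, add_pow_char_pow, add_pow_char_pow]
  linear_combination (-(X 2 ^ 2 ^ k * X 2 : MvPolynomial (Fin 3) F)) *
    CharTwo.two_eq_zero (R := MvPolynomial (Fin 3) F)

theorem phi_two_pow_factorisation_general (k : ℕ) (E : Type*) [Field E]
    [Fintype E] [DecidableEq E] (hcard : Fintype.card E = 2 ^ k)
    (φ : MvPolynomial (Fin 3) E) (hφ : denom E * φ = numerMon E (2 ^ k)) :
    φ = ∏ α ∈ Finset.univ \ ({0, 1} : Finset E),
        (MvPolynomial.X 0 + MvPolynomial.X 2 +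
          MvPolynomial.C α * (MvPolynomial.X 1 + MvPolynomial.X 2)) ∧
      (MvPolynomial.X 0 + MvPolynomial.X 1) * φ =
        (MvPolynomial.X 0 + MvPolynomial.X 2) ^ (2 ^ k - 1) +
          (MvPolynomial.X 1 + MvPolynomial.X 2) ^ (2 ^ k - 1) := by
  have : CharP E 2 := charP_of_card_eq_prime_pow hcard
  set u : MvPolynomial (Fin 3) E := X 0 + X 2
  set v : MvPolynomial (Fin 3) E := X 1 + X 2
  have hu : u ≠ 0 := X_add_X_ne_zero (by decide)
  have hv : v ≠ 0 := X_add_X_ne_zero (by decide)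
  have hxy : (X 0 + X 1 : MvPolynomial (Fin 3) E) = u + v := by
    linear_combination (-(X 2 : MvPolynomial (Fin 3) E)) *
      CharTwo.two_eq_zero (R := MvPolynomial (Fin 3) E)
  have hxyφ : (X 0 + X 1) * φ = u ^ (2 ^ k - 1) + v ^ (2 ^ k - 1) := by
    refine mul_left_cancel₀ (mul_ne_zero hu hv) ?_
    calc u * v * ((X 0 + X 1) * φ) = denom E * φ := by rw [denom]; ring
      _ = u ^ 2 ^ k * v + u * v ^ 2 ^ k := by rw [hφ, numerMon_two_pow]
      _ = u * v * (u ^ (2 ^ k - 1) + v ^ (2 ^ k - 1)) := by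
        rw [← mul_pow_sub_one (pow_ne_zero k two_ne_zero) u,
          ← mul_pow_sub_one (pow_ne_zero k two_ne_zero) v]
        ring
  have hprod := FiniteField.prod_sdiff_zero_one_sub_smul_mul (K := E) hu v
  simp only [CharTwo.sub_eq_add, smul_eq_C_mul, hcard] at hprod
  have huv : u + v ≠ 0 := hxy ▸ X_add_X_ne_zero (by decide)
  refine ⟨mul_left_cancel₀ huv ?_, hxyφ⟩
  rw [← hxy, hxyφ, ← hprod, hxy, mul_comm]

/-- Over the field `F_{2^k}`, the polynomial `φ_{2^k}` factors as the product of the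
linear forms `x + z + α(y+z)` over all `α ∈ F_{2^k} \ F_2`; in particular
`(x+y) · φ_{2^k} = (x+z)^(2^k - 1) + (y+z)^(2^k - 1)`. -/
theorem phi_two_pow_factorisation (k : ℕ) (hk : 0 < k) (E : Type*) [Field E]
    [Fintype E] [DecidableEq E] (hcard : Fintype.card E = 2 ^ k)
    (φ : MvPolynomial (Fin 3) E) (hφ : denom E * φ = numerMon E (2 ^ k)) :
    φ = ∏ α ∈ Finset.univ \ ({0, 1} : Finset E),
        (MvPolynomial.X 0 + MvPolynomial.X 2 +
          MvPolynomial.C α * (MvPolynomial.X 1 + MvPolynomial.X 2)) ∧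
      (MvPolynomial.X 0 + MvPolynomial.X 1) * φ =
        (MvPolynomial.X 0 + MvPolynomial.X 2) ^ (2 ^ k - 1) +
          (MvPolynomial.X 1 + MvPolynomial.X 2) ^ (2 ^ k - 1) :=
  phi_two_pow_factorisation_general k E hcard φ hφ
end

section
/- Let F be a field of characteristic 2 and let f ∈ F[x]. Then the polynomial (x+y)(x+z)(y+z) divides the polynomial x(f(y)+f(z)) + y(f(x)+f(z)) + z(f(x)+f(y)) in F[x,y,z]. -/
open MvPolynomial in
lemma denom_dvd_numerMon (F : Type*) [Field F] [CharP F 2] (j : ℕ) :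
    denom F ∣ numerMon F j := by
  have h2 : (2 : MvPolynomial (Fin 3) F) = 0 := by
    have := CharP.cast_eq_zero (MvPolynomial (Fin 3) F) 2
    exact_mod_cast this
  have base0 : numerMon F 0 = 0 := by
    unfold numerMon
    linear_combination (X 0 + X 1 + X 2 : MvPolynomial (Fin 3) F) * h2
  have base1 : numerMon F 1 = 0 := by
    unfold numerMon
    linear_combination (X 0 * X 1 + X 0 * X 2 + X 1 * X 2 : MvPolynomial (Fin 3) F) * h2
  have base2 : numerMon F 2 = denom F := by
    unfold numerMon denom
    linear_combination (-(X 0 * X 1 * X 2) : MvPolynomial (Fin 3) F) * h2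
  have key : ∀ n : ℕ, numerMon F (n + 3) =
      (X 0 + X 1 + X 2) * numerMon F (n + 2)
        - (X 0 * X 1 + X 0 * X 2 + X 1 * X 2) * numerMon F (n + 1)
        + (X 0 * X 1 * X 2) * numerMon F n := by
    intro n
    unfold numerMon
    ring
  have H : ∀ n : ℕ, denom F ∣ numerMon F n ∧ denom F ∣ numerMon F (n + 1) ∧
      denom F ∣ numerMon F (n + 2) := by
    intro n
    induction n with
    | zero =>
      exact ⟨⟨0, by rw [base0, mul_zero]⟩, ⟨0, by rw [base1, mul_zero]⟩,
        ⟨1, by rw [base2, mul_one]⟩⟩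
    | succ m ih =>
      refine ⟨ih.2.1, ih.2.2, ?_⟩
      have : m + 1 + 2 = m + 3 := by ring
      rw [this, key m]
      exact dvd_add (dvd_sub (ih.2.2.mul_left _) (ih.2.1.mul_left _)) (ih.1.mul_left _)
  exact (H j).1

/-- For a field `F` of characteristic 2 and `f ∈ F[x]`, the polynomial
`(x+y)(x+z)(y+z)` divides `x(f(y)+f(z)) + y(f(x)+f(z)) + z(f(x)+f(y))`. -/
theorem denom_dvd_numer (F : Type*) [Field F] [CharP F 2] (f : Polynomial F) :
    denom F ∣ numer F f := by
  induction f using Polynomial.induction_on' with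
  | add p q hp hq =>
    have : numer F (p + q) = numer F p + numer F q := by
      unfold numer
      simp only [map_add]
      ring
    rw [this]
    exact dvd_add hp hq
  | monomial n a =>
    have : numer F (Polynomial.monomial n a) =
        MvPolynomial.C a * numerMon F n := by
      unfold numer numerMon
      simp [Polynomial.aeval_monomial, MvPolynomial.algebraMap_eq]
      ring
    rw [this]
    exact (denom_dvd_numerMon F n).mul_left _
end

section
/- Let q be a power of two and let f ∈ F_q[x] have degree at least 2. Then none of x+y, x+z, y+z divides Φ_f(x,y,z). -/
/-! ### Auxiliary lemmas -/

lemma pderiv_aeval_self' (F : Type*) [Field F] (i : Fin 3) (f : Polynomial F) :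
    MvPolynomial.pderiv i (Polynomial.aeval (MvPolynomial.X i : MvPolynomial (Fin 3) F) f) =
      Polynomial.aeval (MvPolynomial.X i : MvPolynomial (Fin 3) F) f.derivative := by
  induction f using Polynomial.induction_on' with
  | add p q hp hq => simp [hp, hq]
  | monomial n a =>
      simp [Polynomial.aeval_monomial, MvPolynomial.pderiv_C_mul, MvPolynomial.pderiv_pow,
        Polynomial.derivative_monomial, mul_comm, mul_assoc, mul_left_comm]

lemma pderiv_aeval_ne' (F : Type*) [Field F] {i j : Fin 3} (hij : i ≠ j) (f : Polynomial F) :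
    MvPolynomial.pderiv j (Polynomial.aeval (MvPolynomial.X i : MvPolynomial (Fin 3) F) f) = 0 := by
  induction f using Polynomial.induction_on' with
  | add p q hp hq => simp [hp, hq]
  | monomial n a =>
      simp [Polynomial.aeval_monomial, MvPolynomial.pderiv_C_mul, MvPolynomial.pderiv_pow,
        MvPolynomial.pderiv_X_of_ne hij]

lemma aeval_CX' (F : Type*) [Field F] (p : Polynomial F) :
    Polynomial.aeval (Polynomial.C Polynomial.X : Polynomial (Polynomial F)) p =
      Polynomial.C p := by
  induction p using Polynomial.induction_on' with
  | add p q hp hq => simp only [map_add, hp, hq]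
  | monomial n a =>
      rw [Polynomial.aeval_monomial, ← Polynomial.C_mul_X_pow_eq_monomial,
        Polynomial.algebraMap_apply, Polynomial.algebraMap_eq,
        ← Polynomial.C_pow, ← Polynomial.C_mul, map_mul, map_pow]

lemma aeval_XX' (F : Type*) [Field F] (p : Polynomial F) :
    Polynomial.aeval (Polynomial.X : Polynomial (Polynomial F)) p = p.map Polynomial.C := by
  induction p using Polynomial.induction_on' with
  | add p q hp hq => simp only [map_add, hp, hq, Polynomial.map_add]
  | monomial n a =>
      rw [Polynomial.aeval_monomial, Polynomial.map_monomial,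
        ← Polynomial.C_mul_X_pow_eq_monomial, Polynomial.algebraMap_apply,
        Polynomial.algebraMap_eq]

lemma nonzero_aux (F : Type*) [Field F] (f : Polynomial F) (hdeg : 2 ≤ f.natDegree) :
    (Polynomial.C Polynomial.X + Polynomial.X) * Polynomial.C f.derivative +
      (Polynomial.C f + f.map Polynomial.C) ≠ 0 := by
  intro h0
  obtain ⟨m, hm⟩ : ∃ m, f.natDegree = m + 1 + 1 := ⟨f.natDegree - 2, by omega⟩
  have hc := congrArg (fun p => Polynomial.coeff p (m + 1 + 1)) h0
  have hf0 : f ≠ 0 := fun hf => by simp [hf] at hm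
  simp only [mul_add, add_mul, ← Polynomial.C_mul, Polynomial.coeff_add, Polynomial.coeff_C,
    Polynomial.coeff_X_mul, Polynomial.coeff_map, Polynomial.coeff_zero] at hc
  simp at hc
  rw [← hm] at hc
  exact Polynomial.leadingCoeff_ne_zero.mpr hf0 hc

lemma core_not_dvd (F : Type*) [Field F] [CharP F 2] (f : Polynomial F)
    (hdeg : 2 ≤ f.natDegree) (Φ : MvPolynomial (Fin 3) F) (hΦ : denom F * Φ = numer F f) :
    ¬ (MvPolynomial.X 0 + MvPolynomial.X 1) ∣ Φ := by
  rintro ⟨g, hg⟩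
  set σ : MvPolynomial (Fin 3) F →ₐ[F] MvPolynomial (Fin 3) F :=
    MvPolynomial.aeval ![MvPolynomial.X 0, MvPolynomial.X 0, MvPolynomial.X 2] with hσdef
  have hσ0 : σ (MvPolynomial.X 0) = MvPolynomial.X 0 := by simp [hσdef]
  have hσ1 : σ (MvPolynomial.X 1) = MvPolynomial.X 0 := by simp [hσdef]
  have hσ2 : σ (MvPolynomial.X 2) = MvPolynomial.X 2 := by simp [hσdef]
  have hσd : σ (denom F) = 0 := by
    simp only [denom, map_mul, map_add, hσ0, hσ1, hσ2, CharTwo.add_self_eq_zero, zero_mul]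
  have hσΦ : σ Φ = 0 := by
    rw [hg, map_mul, map_add, hσ0, hσ1, CharTwo.add_self_eq_zero, zero_mul]
  have key : σ (MvPolynomial.pderiv 1 (numer F f)) = 0 := by
    rw [← hΦ, MvPolynomial.pderiv_mul, map_add, map_mul, map_mul, hσd, hσΦ, mul_zero,
      zero_mul, add_zero]
  have expand : σ (MvPolynomial.pderiv 1 (numer F f)) =
      (MvPolynomial.X 0 + MvPolynomial.X 2) *
          Polynomial.aeval (MvPolynomial.X 0 : MvPolynomial (Fin 3) F) f.derivative +
        (Polynomial.aeval (MvPolynomial.X 0 : MvPolynomial (Fin 3) F) f +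
          Polynomial.aeval (MvPolynomial.X 2 : MvPolynomial (Fin 3) F) f) := by
    have h01 : (0 : Fin 3) ≠ 1 := by decide
    have h21 : (2 : Fin 3) ≠ 1 := by decide
    simp only [numer, map_add, MvPolynomial.pderiv_mul, MvPolynomial.pderiv_X_self,
      MvPolynomial.pderiv_X_of_ne h01, MvPolynomial.pderiv_X_of_ne h21,
      pderiv_aeval_self' F, pderiv_aeval_ne' F h01, pderiv_aeval_ne' F h21, map_mul,
      hσ0, hσ1, hσ2, map_zero, map_one, ← Polynomial.aeval_algHom_apply]
    ring
  rw [expand] at key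
  -- push to `Polynomial (Polynomial F)`
  set τ : MvPolynomial (Fin 3) F →ₐ[F] Polynomial (Polynomial F) :=
    MvPolynomial.aeval ![Polynomial.C Polynomial.X, 0, Polynomial.X] with hτdef
  have hτ0 : τ (MvPolynomial.X 0) = Polynomial.C Polynomial.X := by simp [hτdef]
  have hτ2 : τ (MvPolynomial.X 2) = Polynomial.X := by simp [hτdef]
  have := congrArg τ key
  rw [map_add, map_mul, map_add, map_add, ← Polynomial.aeval_algHom_apply,
    ← Polynomial.aeval_algHom_apply, ← Polynomial.aeval_algHom_apply,
    hτ0, hτ2, aeval_CX', aeval_CX', aeval_XX', map_zero] at this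
  exact nonzero_aux F f hdeg this

/-- If `f ∈ F_q[x]` has degree at least 2, then none of `x+y`, `x+z`, `y+z`
divides `Φ_f`. -/
theorem linear_not_dvd_Phi (F : Type*) [Field F] [Finite F] (h : ℕ) (hh : 0 < h)
    (hq : Nat.card F = 2 ^ h) (f : Polynomial F) (hdeg : 2 ≤ f.natDegree)
    (Φ : MvPolynomial (Fin 3) F) (hΦ : denom F * Φ = numer F f) :
    ¬ (MvPolynomial.X 0 + MvPolynomial.X 1) ∣ Φ ∧
    ¬ (MvPolynomial.X 0 + MvPolynomial.X 2) ∣ Φ ∧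
    ¬ (MvPolynomial.X 1 + MvPolynomial.X 2) ∣ Φ := by
  haveI : CharP F 2 := by
    have : Fintype F := Fintype.ofFinite F
    have hcast : ((2 ^ h : ℕ) : F) = 0 := by
      rw [← hq, Nat.card_eq_fintype_card]; exact Nat.cast_card_eq_zero F
    have h2 : (2 : F) = 0 := by
      push_cast at hcast
      exact pow_eq_zero_iff hh.ne' |>.mp hcast
    have hdvd : ringChar F ∣ 2 := ringChar.dvd (by exact_mod_cast h2)
    have hprime : (ringChar F).Prime := CharP.char_is_prime F (ringChar F)
    have h2' : ringChar F = 2 := (Nat.prime_dvd_prime_iff_eq hprime Nat.prime_two).mp hdvd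
    rw [← h2']; exact ringChar.charP F
  refine ⟨core_not_dvd F f hdeg Φ hΦ, ?_, ?_⟩
  · intro hdvd
    set e := Equiv.swap (1 : Fin 3) 2 with he
    have e0 : e 0 = 0 := by rw [he]; decide
    have e1 : e 1 = 2 := by rw [he]; decide
    have e2 : e 2 = 1 := by rw [he]; decide
    have hΦ' : denom F * MvPolynomial.rename e Φ = numer F f := by
      have := congrArg (MvPolynomial.rename e) hΦ
      rw [map_mul] at this
      have hd : MvPolynomial.rename e (denom F) = denom F := by
        simp only [denom, map_mul, map_add, MvPolynomial.rename_X, e0, e1, e2]; ring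
      have hn : MvPolynomial.rename e (numer F f) = numer F f := by
        simp only [numer, map_mul, map_add, ← Polynomial.aeval_algHom_apply,
          MvPolynomial.rename_X, e0, e1, e2]
        ring
      rw [hd, hn] at this
      exact this
    have hd2 : (MvPolynomial.X 0 + MvPolynomial.X 1 : MvPolynomial (Fin 3) F) ∣
        MvPolynomial.rename e Φ := by
      have := map_dvd (MvPolynomial.rename e) hdvd
      rwa [map_add, MvPolynomial.rename_X, MvPolynomial.rename_X, e0, e2] at this
    exact core_not_dvd F f hdeg _ hΦ' hd2
  · intro hdvd
    set e := Equiv.swap (0 : Fin 3) 2 with he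
    have e0 : e 0 = 2 := by rw [he]; decide
    have e1 : e 1 = 1 := by rw [he]; decide
    have e2 : e 2 = 0 := by rw [he]; decide
    have hΦ' : denom F * MvPolynomial.rename e Φ = numer F f := by
      have := congrArg (MvPolynomial.rename e) hΦ
      rw [map_mul] at this
      have hd : MvPolynomial.rename e (denom F) = denom F := by
        simp only [denom, map_mul, map_add, MvPolynomial.rename_X, e0, e1, e2]; ring
      have hn : MvPolynomial.rename e (numer F f) = numer F f := by
        simp only [numer, map_mul, map_add, ← Polynomial.aeval_algHom_apply,
          MvPolynomial.rename_X, e0, e1, e2]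
        ring
      rw [hd, hn] at this
      exact this
    have hd2 : (MvPolynomial.X 0 + MvPolynomial.X 1 : MvPolynomial (Fin 3) F) ∣
        MvPolynomial.rename e Φ := by
      have := map_dvd (MvPolynomial.rename e) hdvd
      rw [map_add, MvPolynomial.rename_X, MvPolynomial.rename_X, e1, e2] at this
      rwa [add_comm] at this
    exact core_not_dvd F f hdeg _ hΦ' hd2
end

section
/- For every even positive integer d, the polynomial φ_d(x,y,z) over F_2 is square-free, i.e., it is not divisible by the square of any nonconstant polynomial (over the algebraic closure of F_2). -/
open MvPolynomial in
/-- Degree in the first variable does not increase when passing to a divisor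
(over an integral domain). -/
lemma degreeOf_zero_le_of_dvd_aux {R : Type*} [CommRing R] [IsDomain R] {n : ℕ}
    {g f : MvPolynomial (Fin (n+1)) R} (hgf : g ∣ f) (hf : f ≠ 0) :
    g.degreeOf 0 ≤ f.degreeOf 0 := by
  have h1 : (finSuccEquiv R n) g ∣ (finSuccEquiv R n) f := map_dvd _ hgf
  have h2 : (finSuccEquiv R n) f ≠ 0 := by
    intro h0
    exact hf ((finSuccEquiv R n).injective (by simp [h0]))
  have := Polynomial.natDegree_le_of_dvd h1 h2
  rwa [natDegree_finSuccEquiv, natDegree_finSuccEquiv] at this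

open MvPolynomial in
/-- Degree in any variable does not increase when passing to a divisor
(over an integral domain). -/
lemma degreeOf_le_of_dvd_aux {R : Type*} [CommRing R] [IsDomain R] {n : ℕ} (i : Fin (n+1))
    {g f : MvPolynomial (Fin (n+1)) R} (hgf : g ∣ f) (hf : f ≠ 0) :
    g.degreeOf i ≤ f.degreeOf i := by
  set e := Equiv.swap i (0 : Fin (n+1)) with he
  have hg' : rename e g ∣ rename e f := map_dvd (rename (e : Fin (n+1) → Fin (n+1))).toRingHom hgf
  have hf' : rename (e : Fin (n+1) → Fin (n+1)) f ≠ 0 := by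
    intro h0
    exact hf (rename_injective _ e.injective (by simpa using h0))
  have h := degreeOf_zero_le_of_dvd_aux hg' hf'
  rw [show (0 : Fin (n+1)) = e i from (Equiv.swap_apply_left i 0).symm,
    degreeOf_rename_of_injective e.injective, degreeOf_rename_of_injective e.injective] at h
  exact h

/-- For every even positive integer `d`, the polynomial `φ_d` over `F_2` is
square-free: over the algebraic closure of `F_2` it is not divisible by the square
of any nonconstant polynomial. -/
theorem phi_squarefree (d : ℕ) (hd : Even d) (hd0 : 0 < d)
    (φ : MvPolynomial (Fin 3) (ZMod 2)) (hφ : denom (ZMod 2) * φ = numerMon (ZMod 2) d) :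
    ∀ g : MvPolynomial (Fin 3) (AlgebraicClosure (ZMod 2)), 0 < g.totalDegree →
      ¬ g ^ 2 ∣ MvPolynomial.map (algebraMap (ZMod 2) (AlgebraicClosure (ZMod 2))) φ := by
  classical
  open MvPolynomial in
  set F := AlgebraicClosure (ZMod 2) with hF
  set r := algebraMap (ZMod 2) F with hr
  intro g hg hdvd
  -- `d = 0` in `F` and in `MvPolynomial (Fin 3) F`
  have h2 : (2 : F) = 0 := by exact_mod_cast CharP.cast_eq_zero F 2
  have hdF : (d : F) = 0 := by
    obtain ⟨k, rfl⟩ := hd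
    push_cast
    rw [← two_mul, h2, zero_mul]
  have hdM : (d : MvPolynomial (Fin 3) F) = 0 := by
    rw [← map_natCast (C : F →+* MvPolynomial (Fin 3) F) d, hdF, map_zero]
  -- map the defining identity to the algebraic closure
  have hmap : denom F * MvPolynomial.map r φ = numerMon F d := by
    have h := congrArg (MvPolynomial.map r) hφ
    simpa only [denom, numerMon, map_add, map_mul, map_pow, MvPolynomial.map_X] using h
  have hN : g ^ 2 ∣ numerMon F d := by
    rw [← hmap]
    exact hdvd.mul_left (denom F)
  -- `g` divides every partial derivative of `numerMon F d`
  have key : ∀ i : Fin 3, g ∣ MvPolynomial.pderiv i (numerMon F d) := by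
    intro i
    obtain ⟨q, hq⟩ := hN
    rw [hq, pderiv_mul, pderiv_pow]
    exact dvd_add ⟨2 * pderiv i g * q, by ring⟩ ⟨g * pderiv i q, by ring⟩
  -- compute the partial derivatives
  have hp0 : MvPolynomial.pderiv 0 (numerMon F d) = X 1 ^ d + X 2 ^ d := by
    simp [numerMon, pderiv_mul, pderiv_pow, pderiv_X_self,
      pderiv_X_of_ne (show (1:Fin 3) ≠ 0 by decide),
      pderiv_X_of_ne (show (2:Fin 3) ≠ 0 by decide), hdM]
  have hp1 : MvPolynomial.pderiv 1 (numerMon F d) = X 0 ^ d + X 2 ^ d := by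
    simp [numerMon, pderiv_mul, pderiv_pow, pderiv_X_self,
      pderiv_X_of_ne (show (0:Fin 3) ≠ 1 by decide),
      pderiv_X_of_ne (show (2:Fin 3) ≠ 1 by decide), hdM]
  have hp2 : MvPolynomial.pderiv 2 (numerMon F d) = X 0 ^ d + X 1 ^ d := by
    simp [numerMon, pderiv_mul, pderiv_pow, pderiv_X_self,
      pderiv_X_of_ne (show (0:Fin 3) ≠ 2 by decide),
      pderiv_X_of_ne (show (1:Fin 3) ≠ 2 by decide), hdM]
  -- the partial derivatives are nonzero
  have fne : ∀ i j : Fin 3, i ≠ j → (X i ^ d + X j ^ d : MvPolynomial (Fin 3) F) ≠ 0 := by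
    intro i j hij h0
    have := congrArg (MvPolynomial.eval (fun k => if k = i then 1 else 0)) h0
    simp [hij.symm, zero_pow hd0.ne'] at this
  -- each partial derivative has degree zero in the missing variable
  have hdx : ∀ (i j : Fin 3), i ≠ j →
      degreeOf i ((X j : MvPolynomial (Fin 3) F) ^ d) = 0 := by
    intro i j hij
    refine Nat.le_zero.mp (le_trans (degreeOf_pow_le _ _ _) ?_)
    rw [degreeOf_X, if_neg hij]
    simp
  have hdf : ∀ (i j k : Fin 3), i ≠ j → i ≠ k →
      degreeOf i ((X j ^ d + X k ^ d : MvPolynomial (Fin 3) F)) = 0 := by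
    intro i j k hij hik
    refine Nat.le_zero.mp (le_trans (degreeOf_add_le _ _ _) ?_)
    simp [hdx _ _ hij, hdx _ _ hik]
  -- conclude each degreeOf of g is zero
  have hdeg : ∀ x : Fin 3, degreeOf x g = 0 := by
    intro x
    fin_cases x
    · exact Nat.le_zero.mp (le_trans
        (degreeOf_le_of_dvd_aux 0 (hp0 ▸ key 0) (fne 1 2 (by decide)))
        (le_of_eq (hdf 0 1 2 (by decide) (by decide))))
    · exact Nat.le_zero.mp (le_trans
        (degreeOf_le_of_dvd_aux 1 (hp1 ▸ key 1) (fne 0 2 (by decide)))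
        (le_of_eq (hdf 1 0 2 (by decide) (by decide))))
    · exact Nat.le_zero.mp (le_trans
        (degreeOf_le_of_dvd_aux 2 (hp2 ▸ key 2) (fne 0 1 (by decide)))
        (le_of_eq (hdf 2 0 1 (by decide) (by decide))))
  -- hence g has total degree zero, contradiction
  have ht : g.totalDegree = 0 := by
    rw [totalDegree_eq_zero_iff]
    intro m hm x
    have h := hdeg x
    rw [degreeOf_eq_sup] at h
    exact Nat.le_zero.mp ((Finset.le_sup hm).trans_eq h)
  omega
end

section
/- Let q be a power of two, let f be an o-polynomial of F_q, and let a ∈ F_q. Then f(1+a) + f(a) ≠ 0, and the polynomial g defined by g(x) = (f(x+a)+f(a))/(f(1+a)+f(a)) is again an o-polynomial of F_q. -/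
open Polynomial

/-- If `f` is an o-polynomial of `F_q` and `a ∈ F_q`, then `f(1+a) + f(a) ≠ 0` and
`g(x) = (f(x+a) + f(a)) / (f(1+a) + f(a))` is again an o-polynomial of `F_q`. -/
theorem opoly_equiv_invariant (F : Type*) [Field F] [Finite F] (h : ℕ) (hh : 0 < h)
    (hq : Nat.card F = 2 ^ h) (f : F[X]) (hf : IsOPoly F f) (a : F) :
    f.eval (1 + a) + f.eval a ≠ 0 ∧
    IsOPoly F (Polynomial.C (f.eval (1 + a) + f.eval a)⁻¹ *
      (f.comp (Polynomial.X + Polynomial.C a) + Polynomial.C (f.eval a))) := by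
  classical
  obtain ⟨hdeg, hbij, h0, h1, hdet⟩ := hf
  haveI : Fintype F := Fintype.ofFinite F
  -- characteristic 2
  haveI hchar2 : CharP F 2 := by
    obtain ⟨n, hp, hcard⟩ := FiniteField.card F (ringChar F)
    have hcard' : (ringChar F) ^ (n : ℕ) = 2 ^ h := by
      rw [← hcard, ← Nat.card_eq_fintype_card, hq]
    have hdvd : ringChar F ∣ 2 := by
      have : ringChar F ∣ 2 ^ h := hcard' ▸ dvd_pow_self _ n.pos.ne'
      exact hp.dvd_of_dvd_pow this
    have : ringChar F = 2 := (Nat.prime_dvd_prime_iff_eq hp Nat.prime_two).mp hdvd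
    exact this ▸ ringChar.charP F
  have hself : ∀ x : F, x + x = 0 := fun x => CharTwo.add_self_eq_zero x
  set d : F := f.eval (1 + a) + f.eval a with hd_def
  have hne : (1 : F) + a ≠ a := by
    intro hcon
    have hcon' : (1 : F) + a = 0 + a := by simpa using hcon
    exact one_ne_zero (add_right_cancel hcon')
  have hd : d ≠ 0 := by
    intro hcon
    have : f.eval (1 + a) = f.eval a := by
      have := congrArg (fun t => t + f.eval a) hcon
      simpa [hd_def, add_assoc, hself (f.eval a)] using this
    exact hne (hbij.injective this)
  have heval : ∀ x : F,
      (Polynomial.C d⁻¹ * (f.comp (X + C a) + C (f.eval a))).eval x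
        = d⁻¹ * (f.eval (x + a) + f.eval a) := by
    intro x; simp [eval_comp]
  refine ⟨hd, ?_, ?_, ?_, ?_, ?_⟩
  · -- degree bound
    calc (Polynomial.C d⁻¹ * (f.comp (X + C a) + C (f.eval a))).natDegree
        ≤ (Polynomial.C d⁻¹).natDegree + (f.comp (X + C a) + C (f.eval a)).natDegree :=
          natDegree_mul_le
      _ = (f.comp (X + C a) + C (f.eval a)).natDegree := by simp
      _ ≤ max (f.comp (X + C a)).natDegree (C (f.eval a)).natDegree := natDegree_add_le _ _
      _ ≤ f.natDegree := by
          simp [natDegree_comp]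
      _ ≤ Nat.card F - 1 := hdeg
  · -- bijective
    rw [Finite.injective_iff_bijective.symm]
    intro x y hxy
    simp only [heval] at hxy
    have h1' := mul_left_cancel₀ (inv_ne_zero hd) hxy
    have h2' : f.eval (x + a) = f.eval (y + a) := by
      have := congrArg (fun t => t + f.eval a) h1'
      simpa [add_assoc, hself (f.eval a)] using this
    have := hbij.injective h2'
    exact add_right_cancel this
  · simp [eval_comp, h0, hself (f.eval a)]
  · simp only [eval_mul, eval_C, eval_add, eval_comp, eval_X]
    exact inv_mul_cancel₀ hd
  · intro x y z hxy hxz hyz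
    have hxy' : x + a ≠ y + a := fun hc => hxy (add_right_cancel hc)
    have hxz' : x + a ≠ z + a := fun hc => hxz (add_right_cancel hc)
    have hyz' : y + a ≠ z + a := fun hc => hyz (add_right_cancel hc)
    have hD := hdet (x + a) (y + a) (z + a) hxy' hxz' hyz'
    have key : ∀ u v w : F, Matrix.det !![1, 1, 1; x, y, z;
        d⁻¹ * (u + f.eval a), d⁻¹ * (v + f.eval a), d⁻¹ * (w + f.eval a)]
        = d⁻¹ * Matrix.det !![1, 1, 1; x + a, y + a, z + a; u, v, w] := by
      intro u v w
      simp only [Matrix.det_fin_three, Matrix.cons_val', Matrix.cons_val_zero,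
        Matrix.cons_val_one, Matrix.head_cons, Matrix.empty_val',
        Matrix.cons_val_fin_one, Matrix.head_fin_const, Matrix.cons_val_two,
        Matrix.tail_cons, Matrix.of_apply, Matrix.cons_val_succ]
      ring
    simp only [heval]
    rw [key]
    exact mul_ne_zero (inv_ne_zero hd) hD
end
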